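/- arXiv:0805.4001 — 5 statements merged into one kernel-verified Lean document; each statement's English description precedes it below -/
import Mathlib

section
/- Let R be a discrete valuation ring, A = R[z]/(z^n), and M a finitely generated A-module. For each 0 ≤ i < n, multiplication by z induces an isomorphism between M^{(i+1)}/M^{(i)} (with M^{(j)} = {u : z^j u = 0}) and the kernel of the multiplication-by-z map z^i M → z^{i+1} M. -/
open Polynomial

/-- The local model `A = R[z]/(z^n)` of a primitive multiple curve of multiplicity `n`. -/
abbrev Az (R : Type) [CommRing R] (n : ℕ) : Type :=
  R[X] ⧸ Ideal.span ({X ^ n} : Set R[X])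

/-- The class of `z` (i.e. of `X`) in `A = R[z]/(z^n)`. -/
noncomputable def zc (R : Type) [CommRing R] (n : ℕ) : Az R n :=
  Ideal.Quotient.mk _ X

/-- The submodule `z^i M` of `M` (first canonical filtration). -/
noncomputable def zpowSub (R : Type) [CommRing R] (n : ℕ) (M : Type) [AddCommGroup M]
    [Module (Az R n) M] (i : ℕ) : Submodule (Az R n) M :=
  LinearMap.range ((zc R n ^ i) • (LinearMap.id : M →ₗ[Az R n] M))

/-- The submodule `M^{(i)} = {u ∈ M : z^i • u = 0}` (second canonical filtration). -/
noncomputable def ztor (R : Type) [CommRing R] (n : ℕ) (M : Type) [AddCommGroup M]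
    [Module (Az R n) M] (i : ℕ) : Submodule (Az R n) M :=
  LinearMap.ker ((zc R n ^ i) • (LinearMap.id : M →ₗ[Az R n] M))


namespace Submodule

variable {A M : Type*} [CommRing A] [AddCommGroup M] [Module A M] (a b : A)

theorem smul_mem_range_inf_torsionBy {x : M} (hx : x ∈ torsionBy A M (b * a)) :
    a • x ∈ LinearMap.range (DistribSMul.toLinearMap A M a) ⊓ torsionBy A M b := by
  refine ⟨⟨x, rfl⟩, ?_⟩
  rw [SetLike.mem_coe, mem_torsionBy_iff, ← mul_smul]
  exact hx

noncomputable def smulTorsionByMul :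
    torsionBy A M (b * a) →ₗ[A]
      ↥(LinearMap.range (DistribSMul.toLinearMap A M a) ⊓ torsionBy A M b) :=
  LinearMap.codRestrict _ ((DistribSMul.toLinearMap A M a).comp (torsionBy A M (b * a)).subtype)
    fun u => smul_mem_range_inf_torsionBy a b u.2

theorem smulTorsionByMul_surjective : Function.Surjective (smulTorsionByMul (M := M) a b) := by
  rintro ⟨_, ⟨u, rfl⟩, hu⟩
  refine ⟨⟨u, ?_⟩, rfl⟩
  rw [mem_torsionBy_iff, mul_smul]
  exact hu

theorem ker_smulTorsionByMul :
    LinearMap.ker (smulTorsionByMul (M := M) a b) =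
      comap (torsionBy A M (b * a)).subtype (torsionBy A M a) :=
  (LinearMap.ker_codRestrict _ _ _).trans (LinearMap.ker_comp _ _)

noncomputable def torsionByMulQuotEquiv :
    (torsionBy A M (b * a) ⧸ comap (torsionBy A M (b * a)).subtype (torsionBy A M a)) ≃ₗ[A]
      ↥(LinearMap.range (DistribSMul.toLinearMap A M a) ⊓ torsionBy A M b) :=
  (quotEquivOfEq _ _ (ker_smulTorsionByMul (M := M) a b).symm).trans
    ((smulTorsionByMul (M := M) a b).quotKerEquivOfSurjective (smulTorsionByMul_surjective a b))

theorem coe_torsionByMulQuotEquiv_mk (u : torsionBy A M (b * a)) :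
    (torsionByMulQuotEquiv a b (Quotient.mk u) : M) = a • (u : M) :=
  rfl

end Submodule

theorem stmt2_general (R : Type) [CommRing R] (n : ℕ)
    (M : Type) [AddCommGroup M] [Module (Az R n) M]
    (i : ℕ) :
    ∃ e : (ztor R n M (i + 1) ⧸
            Submodule.comap (ztor R n M (i + 1)).subtype (ztor R n M i)) ≃ₗ[Az R n]
          ↥(zpowSub R n M i ⊓ ztor R n M 1),
      ∀ u : ztor R n M (i + 1),
        ((e (Submodule.Quotient.mk u) : ↥(zpowSub R n M i ⊓ ztor R n M 1)) : M)
          = (zc R n ^ i) • (u : M) := by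
  have h : ztor R n M (i + 1) = Submodule.torsionBy _ M (zc R n ^ 1 * zc R n ^ i) := by
    rw [← pow_add, add_comm]
    rfl
  rw [h]
  exact ⟨Submodule.torsionByMulQuotEquiv _ _, Submodule.coe_torsionByMulQuotEquiv_mk _ _⟩

/-- For `A = R[z]/(z^n)` over a DVR `R` and a finitely generated `A`-module
`M`, for each `0 ≤ i < n` multiplication by `z^i` induces an isomorphism between
`M^{(i+1)}/M^{(i)}` and the kernel of multiplication by `z` on `z^i M` (i.e. the kernel of
`z : z^i M → z^{i+1} M`). -/
theorem stmt2 (R : Type) [CommRing R] [IsDomain R] [IsDiscreteValuationRing R] (n : ℕ)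
    (M : Type) [AddCommGroup M] [Module (Az R n) M] [Module.Finite (Az R n) M]
    (i : ℕ) (hi : i < n) :
    ∃ e : (ztor R n M (i + 1) ⧸
            Submodule.comap (ztor R n M (i + 1)).subtype (ztor R n M i)) ≃ₗ[Az R n]
          ↥(zpowSub R n M i ⊓ ztor R n M 1),
      ∀ u : ztor R n M (i + 1),
        ((e (Submodule.Quotient.mk u) : ↥(zpowSub R n M i ⊓ ztor R n M 1)) : M)
          = (zc R n ^ i) • (u : M) :=
  stmt2_general R n M i
end

section
/- Let R be a discrete valuation ring, A = R[z]/(z^n), and M a finitely generated A-module. For 0 ≤ i < n, the kernel of the multiplication-by-z map μ : z^i M/z^{i+1} M → z^{i+1} M/z^{i+2} M is isomorphic to the cokernel of the multiplication-by-z map λ : M^{(i+2)}/M^{(i+1)} → M^{(i+1)}/M^{(i)}. -/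
/-!
For `u ∈ M^{(i+1)}` the class of `z^i u` in `z^i M / z^{i+1} M` is killed by `μ`, and every
element of `ker μ` arises this way: if `z^{i+1} v = z^{i+2} w` then `u = v - z w` works. The class
of `z^i u` vanishes iff `z^i u = z^{i+1} w` for some `w`; such a `w` lies in `M^{(i+2)}` and
satisfies `z w ≡ u` modulo `M^{(i)}`, which says exactly that `u` maps into the image of `λ`.
So `u ↦ [z^i u]` and `M^{(i+1)} → coker λ` have the same kernel, whence `ker μ ≅ coker λ`.
-/

open Polynomial

open Submodule

namespace LinearMap

variable {R P Q Q' : Type*} [Ring R] [AddCommGroup P] [AddCommGroup Q] [AddCommGroup Q']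
  [Module R P] [Module R Q] [Module R Q']

noncomputable def rangeEquivOfKerEq (f : P →ₗ[R] Q) (g : P →ₗ[R] Q')
    (hg : Function.Surjective g) (h : ker f = ker g) : range f ≃ₗ[R] Q' :=
  f.quotKerEquivRange.symm ≪≫ₗ quotEquivOfEq _ _ h ≪≫ₗ g.quotKerEquivOfSurjective hg

end LinearMap

section

variable {A : Type*} [CommRing A] (M : Type*) [AddCommGroup M] [Module A M]

def smulPowRange (z : A) (i : ℕ) : Submodule A M :=
  LinearMap.range (DistribSMul.toLinearMap A M (z ^ i))

variable {M}

theorem mem_smulPowRange {z : A} {i : ℕ} {x : M} :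
    x ∈ smulPowRange M z i ↔ ∃ y, z ^ i • y = x := by
  simp only [smulPowRange, LinearMap.mem_range, DistribSMul.toLinearMap_apply]

theorem smul_mem_smulPowRange_succ {z : A} {i : ℕ} {x : M} (hx : x ∈ smulPowRange M z i) :
    z • x ∈ smulPowRange M z (i + 1) := by
  obtain ⟨y, rfl⟩ := mem_smulPowRange.1 hx
  exact mem_smulPowRange.2 ⟨y, by rw [smul_smul, pow_succ']⟩

theorem smul_mem_torsionBy_pow {z : A} {i : ℕ} {x : M} (hx : x ∈ torsionBy A M (z ^ (i + 1))) :
    z • x ∈ torsionBy A M (z ^ i) := by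
  rwa [mem_torsionBy_iff, smul_smul, ← pow_succ]

theorem pow_smul_mem_smulPowRange (z : A) (i : ℕ) (y : M) : z ^ i • y ∈ smulPowRange M z i :=
  mem_smulPowRange.2 ⟨y, rfl⟩

variable (z : A) (i : ℕ)

noncomputable def smulPowClass :
    torsionBy A M (z ^ (i + 1)) →ₗ[A]
      smulPowRange M z i ⧸ (smulPowRange M z (i + 1)).submoduleOf (smulPowRange M z i) :=
  mkQ _ ∘ₗ
    LinearMap.codRestrict _ (DistribSMul.toLinearMap A M (z ^ i) ∘ₗ Submodule.subtype _)
    (fun u => pow_smul_mem_smulPowRange z i (u : M))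

theorem smulPowClass_apply (u : torsionBy A M (z ^ (i + 1))) :
    smulPowClass z i u =
      Submodule.Quotient.mk ⟨z ^ i • (u : M), pow_smul_mem_smulPowRange z i (u : M)⟩ :=
  rfl

variable {z i}

theorem range_smulPowClass
    {mu : (smulPowRange M z i ⧸
        (smulPowRange M z (i + 1)).submoduleOf (smulPowRange M z i)) →ₗ[A]
      (smulPowRange M z (i + 1) ⧸
        (smulPowRange M z (i + 2)).submoduleOf (smulPowRange M z (i + 1)))}
    (hmu : ∀ (u : M) (hu : u ∈ smulPowRange M z i) (hv : z • u ∈ smulPowRange M z (i + 1)),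
      mu (Submodule.Quotient.mk ⟨u, hu⟩) = Submodule.Quotient.mk ⟨z • u, hv⟩) :
    LinearMap.range (smulPowClass z i) = LinearMap.ker mu := by
  have mem_ker_iff : ∀ x (hx : x ∈ smulPowRange M z i),
      Submodule.Quotient.mk ⟨x, hx⟩ ∈ LinearMap.ker mu ↔
        z • x ∈ smulPowRange M z (i + 2) := by
    intro x hx
    rw [LinearMap.mem_ker, hmu x hx (smul_mem_smulPowRange_succ hx), Submodule.Quotient.mk_eq_zero]
    rfl
  ext q
  obtain ⟨⟨_, hx⟩, rfl⟩ := Submodule.Quotient.mk_surjective _ q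
  obtain ⟨y, rfl⟩ := mem_smulPowRange.1 hx
  rw [mem_ker_iff, mem_smulPowRange, LinearMap.mem_range]
  constructor
  · rintro ⟨u, hu⟩
    rw [smulPowClass_apply, Submodule.Quotient.eq] at hu
    obtain ⟨v, hv⟩ := mem_smulPowRange.1 hu
    have hv : z ^ (i + 1) • v = z ^ i • (u : M) - z ^ i • y := hv
    have hu0 : z ^ (i + 1) • (u : M) = 0 := u.2
    exact ⟨-v, by linear_combination (norm := module) -(z • hv) - hu0⟩
  · rintro ⟨w, hw⟩
    have hu : y - z • w ∈ torsionBy A M (z ^ (i + 1)) := by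
      rw [mem_torsionBy_iff]
      linear_combination (norm := module) -hw
    refine ⟨⟨_, hu⟩, ?_⟩
    rw [smulPowClass_apply, Submodule.Quotient.eq]
    exact mem_smulPowRange.2 ⟨-w, show _ = z ^ i • (y - z • w) - z ^ i • y by module⟩

section

variable
    {lam : (torsionBy A M (z ^ (i + 2)) ⧸
        (torsionBy A M (z ^ (i + 1))).submoduleOf (torsionBy A M (z ^ (i + 2)))) →ₗ[A]
      (torsionBy A M (z ^ (i + 1)) ⧸
        (torsionBy A M (z ^ i)).submoduleOf (torsionBy A M (z ^ (i + 1))))}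
    (hlam : ∀ (u : M) (hu : u ∈ torsionBy A M (z ^ (i + 2)))
      (hv : z • u ∈ torsionBy A M (z ^ (i + 1))),
      lam (Submodule.Quotient.mk ⟨u, hu⟩) = Submodule.Quotient.mk ⟨z • u, hv⟩)
include hlam

theorem mk_mem_range_iff_pow_smul_mem (u : torsionBy A M (z ^ (i + 1))) :
    Submodule.Quotient.mk u ∈ LinearMap.range lam ↔
      z ^ i • (u : M) ∈ smulPowRange M z (i + 1) := by
  rw [mem_smulPowRange]
  have hu0 : z ^ (i + 1) • (u : M) = 0 := u.2
  constructor
  · rintro ⟨q, hq⟩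
    obtain ⟨⟨w, hw⟩, rfl⟩ := Submodule.Quotient.mk_surjective _ q
    rw [hlam w hw (smul_mem_torsionBy_pow hw), Submodule.Quotient.eq] at hq
    have hq : z ^ i • (z • w - u) = 0 := hq
    exact ⟨w, by linear_combination (norm := module) hq⟩
  · rintro ⟨w, hw⟩
    have hw2 : w ∈ torsionBy A M (z ^ (i + 2)) := by
      rw [mem_torsionBy_iff]
      linear_combination (norm := module) z • hw + hu0
    refine ⟨Submodule.Quotient.mk ⟨w, hw2⟩, ?_⟩
    rw [hlam w hw2 (smul_mem_torsionBy_pow hw2), Submodule.Quotient.eq]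
    show z ^ i • (z • w - u) = 0
    linear_combination (norm := module) hw

theorem ker_smulPowClass :
    LinearMap.ker (smulPowClass z i) =
      LinearMap.ker ((LinearMap.range lam).mkQ ∘ₗ mkQ _) := by
  ext u
  rw [LinearMap.mem_ker, LinearMap.mem_ker, LinearMap.comp_apply, mkQ_apply, mkQ_apply,
    Submodule.Quotient.mk_eq_zero, mk_mem_range_iff_pow_smul_mem hlam,
    smulPowClass_apply, Submodule.Quotient.mk_eq_zero]
  rfl

end

end

theorem stmt4_general (R : Type) [CommRing R] (n : ℕ)
    (M : Type) [AddCommGroup M] [Module (Az R n) M]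
    (i : ℕ)
    (mu : (zpowSub R n M i ⧸
            Submodule.comap (zpowSub R n M i).subtype (zpowSub R n M (i + 1))) →ₗ[Az R n]
          (zpowSub R n M (i + 1) ⧸
            Submodule.comap (zpowSub R n M (i + 1)).subtype (zpowSub R n M (i + 2))))
    (hmu : ∀ (u : M) (hu : u ∈ zpowSub R n M i) (hv : zc R n • u ∈ zpowSub R n M (i + 1)),
      mu (Submodule.Quotient.mk ⟨u, hu⟩) = Submodule.Quotient.mk ⟨zc R n • u, hv⟩)
    (lam : (ztor R n M (i + 2) ⧸
            Submodule.comap (ztor R n M (i + 2)).subtype (ztor R n M (i + 1))) →ₗ[Az R n]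
           (ztor R n M (i + 1) ⧸
            Submodule.comap (ztor R n M (i + 1)).subtype (ztor R n M i)))
    (hlam : ∀ (u : M) (hu : u ∈ ztor R n M (i + 2)) (hv : zc R n • u ∈ ztor R n M (i + 1)),
      lam (Submodule.Quotient.mk ⟨u, hu⟩) = Submodule.Quotient.mk ⟨zc R n • u, hv⟩) :
    Nonempty (↥(LinearMap.ker mu) ≃ₗ[Az R n]
      ((ztor R n M (i + 1) ⧸
          Submodule.comap (ztor R n M (i + 1)).subtype (ztor R n M i)) ⧸
        LinearMap.range lam)) :=
  -- `zpowSub R n M` and `ztor R n M` unfold to `smulPowRange M (zc R n)` and `torsionBy`.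
  ⟨(LinearEquiv.ofEq _ _ (range_smulPowClass hmu)).symm ≪≫ₗ
    (smulPowClass (zc R n) i).rangeEquivOfKerEq _
      ((mkQ_surjective _).comp (mkQ_surjective _)) (ker_smulPowClass hlam)⟩

/-- For `A = R[z]/(z^n)` over a DVR `R`, a finitely generated `A`-module `M`
and `0 ≤ i < n`: the kernel of the multiplication-by-`z` map
`μ : z^i M/z^{i+1} M → z^{i+1} M/z^{i+2} M` is isomorphic to the cokernel of the
multiplication-by-`z` map `λ : M^{(i+2)}/M^{(i+1)} → M^{(i+1)}/M^{(i)}`. -/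
theorem stmt4 (R : Type) [CommRing R] [IsDomain R] [IsDiscreteValuationRing R] (n : ℕ)
    (M : Type) [AddCommGroup M] [Module (Az R n) M] [Module.Finite (Az R n) M]
    (i : ℕ) (hi : i < n)
    (mu : (zpowSub R n M i ⧸
            Submodule.comap (zpowSub R n M i).subtype (zpowSub R n M (i + 1))) →ₗ[Az R n]
          (zpowSub R n M (i + 1) ⧸
            Submodule.comap (zpowSub R n M (i + 1)).subtype (zpowSub R n M (i + 2))))
    (hmu : ∀ (u : M) (hu : u ∈ zpowSub R n M i) (hv : zc R n • u ∈ zpowSub R n M (i + 1)),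
      mu (Submodule.Quotient.mk ⟨u, hu⟩) = Submodule.Quotient.mk ⟨zc R n • u, hv⟩)
    (lam : (ztor R n M (i + 2) ⧸
            Submodule.comap (ztor R n M (i + 2)).subtype (ztor R n M (i + 1))) →ₗ[Az R n]
           (ztor R n M (i + 1) ⧸
            Submodule.comap (ztor R n M (i + 1)).subtype (ztor R n M i)))
    (hlam : ∀ (u : M) (hu : u ∈ ztor R n M (i + 2)) (hv : zc R n • u ∈ ztor R n M (i + 1)),
      lam (Submodule.Quotient.mk ⟨u, hu⟩) = Submodule.Quotient.mk ⟨zc R n • u, hv⟩) :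
    Nonempty (↥(LinearMap.ker mu) ≃ₗ[Az R n]
      ((ztor R n M (i + 1) ⧸
          Submodule.comap (ztor R n M (i + 1)).subtype (ztor R n M i)) ⧸
        LinearMap.range lam)) :=
  stmt4_general R n M i mu hmu lam hlam
end

section
/- Let R be a discrete valuation ring with fraction field K, A = R[z]/(z^n), and define the generalized rank of a finitely generated A-module M as R(M) = Σ_{i=0}^{n-1} dim_K ((z^i M/z^{i+1} M) ⊗_R K). Then for any short exact sequence 0 → M' → M → M'' → 0 of finitely generated A-modules, R(M) = R(M') + R(M''). -/
open Polynomial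

open scoped TensorProduct

/-- The graded piece `G_i(M) = z^i M / z^{i+1} M`. -/
noncomputable abbrev gQ (R : Type) [CommRing R] (n : ℕ) (M : Type) [AddCommGroup M]
    [Module (Az R n) M] (i : ℕ) :=
  zpowSub R n M i ⧸ Submodule.comap (zpowSub R n M i).subtype (zpowSub R n M (i + 1))

/-- The generalized rank `R(M) = Σ_{i<n} dim_K ((z^i M/z^{i+1} M) ⊗_R K)`, where
`K = Frac(R)`. -/
noncomputable def grk (R : Type) [CommRing R] [IsDomain R] (n : ℕ) (M : Type) [AddCommGroup M]
    [Module (Az R n) M] : Cardinal :=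
  ∑ i ∈ Finset.range n,
    Module.rank (FractionRing R)
      (FractionRing R ⊗[R] (RestrictScalars R (Az R n) (gQ R n M i)))

/-!
Since `K` is a localization of `R`, `dim_K (K ⊗_R N)` is just the rank of the `R`-module `N`,
and over a domain this rank is additive on short exact sequences. Summing it along the finite
filtration `M = z⁰M ⊇ z¹M ⊇ ⋯ ⊇ zⁿM = 0` telescopes, so `R(M)` is the `R`-rank of `M` itself;
in particular the mismatch between the filtration induced on `M'` and its own `z`-adic
filtration never enters.
-/

universe u v

open nonZeroDivisors

theorem rank_tensorProduct_of_isFractionRing {R : Type*} (K : Type u) [CommRing R] [CommRing K]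
    [Algebra R K] [IsFractionRing R K] (N : Type u) [AddCommGroup N] [Module R N] :
    Module.rank K (K ⊗[R] N) = Module.rank R N := by
  rw [IsFractionRing.rank_right_eq R K,
    IsLocalizedModule.rank_eq R⁰ le_rfl (TensorProduct.mk R K N 1)]

theorem Function.Exact.rank_eq_add_rank {R : Type*} [Ring R] [HasRankNullity.{v} R]
    {M' M M'' : Type v} [AddCommGroup M'] [Module R M'] [AddCommGroup M] [Module R M]
    [AddCommGroup M''] [Module R M''] {f : M' →ₗ[R] M} {g : M →ₗ[R] M''}
    (hf : Function.Injective f) (hg : Function.Surjective g) (h : Function.Exact f g) :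
    Module.rank R M = Module.rank R M' + Module.rank R M'' := by
  rw [← g.rank_range_add_rank_ker, rank_range_of_surjective g hg, LinearMap.exact_iff.mp h,
    ← (LinearEquiv.ofInjective f hf).rank_eq, add_comm]

section RestrictScalars

/-- Instance search does not unify the additive monoid underlying the `AddCommGroup` instance of
`RestrictScalars` with its `AddCommMonoid` instance, so `RestrictScalars.module` is restated over
the former. -/
instance RestrictScalars.moduleOfAddCommGroup {R A X : Type*} [CommRing R] [CommRing A]
    [Algebra R A] [AddCommGroup X] [Module A X] :
    @Module R (RestrictScalars R A X) _
      (@AddCommGroup.toAddCommMonoid _ (instAddCommGroupRestrictScalars R A X)) :=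
  RestrictScalars.module R A X

variable (R : Type*) {A : Type*} [CommRing R] [CommRing A] [Algebra R A]
variable {X Y Z : Type v} [AddCommGroup X] [Module A X] [AddCommGroup Y] [Module A Y]
  [AddCommGroup Z] [Module A Z]

def RestrictScalars.map (f : X →ₗ[A] Y) :
    RestrictScalars R A X →ₗ[R] RestrictScalars R A Y where
  toFun := f
  map_add' := f.map_add
  map_smul' r := f.map_smul (algebraMap R A r)

def RestrictScalars.congr (e : X ≃ₗ[A] Y) :
    RestrictScalars R A X ≃ₗ[R] RestrictScalars R A Y :=
  { RestrictScalars.map R e.toLinearMap with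
    invFun := e.symm
    left_inv := e.left_inv
    right_inv := e.right_inv }

theorem LinearEquiv.rank_restrictScalars_eq (e : X ≃ₗ[A] Y) :
    Module.rank R (RestrictScalars R A X) = Module.rank R (RestrictScalars R A Y) :=
  (RestrictScalars.congr R e).rank_eq

theorem Function.Exact.rank_restrictScalars_eq_add [HasRankNullity.{v} R]
    {f : X →ₗ[A] Y} {g : Y →ₗ[A] Z} (hf : Function.Injective f) (hg : Function.Surjective g)
    (h : Function.Exact f g) :
    Module.rank R (RestrictScalars R A Y) =
      Module.rank R (RestrictScalars R A X) + Module.rank R (RestrictScalars R A Z) :=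
  Function.Exact.rank_eq_add_rank (f := RestrictScalars.map R f) (g := RestrictScalars.map R g)
    hf hg h

variable [HasRankNullity.{v} R]

theorem Submodule.rank_restrictScalars_eq_add_of_le {N P : Submodule A X} (hNP : N ≤ P) :
    Module.rank R (RestrictScalars R A P) = Module.rank R (RestrictScalars R A N) +
      Module.rank R (RestrictScalars R A (P ⧸ N.comap P.subtype)) := by
  rw [(Submodule.comapSubtypeEquivOfLe hNP).symm.rank_restrictScalars_eq R]
  exact Function.Exact.rank_restrictScalars_eq_add R (Submodule.injective_subtype _)
    (Submodule.mkQ_surjective _) (LinearMap.exact_subtype_mkQ _)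

theorem Antitone.rank_restrictScalars_eq_sum_add {F : ℕ → Submodule A X} (hF : Antitone F)
    (m : ℕ) :
    Module.rank R (RestrictScalars R A (F 0)) =
      (∑ i ∈ Finset.range m,
        Module.rank R (RestrictScalars R A (F i ⧸ (F (i + 1)).comap (F i).subtype))) +
        Module.rank R (RestrictScalars R A (F m)) := by
  induction m with
  | zero => simp
  | succ m ih =>
    rw [ih, Finset.sum_range_succ,
      Submodule.rank_restrictScalars_eq_add_of_le R (hF m.le_succ), add_assoc, add_comm
        (Module.rank R (RestrictScalars R A (F (m + 1))))]

theorem Antitone.rank_restrictScalars_eq_sum {F : ℕ → Submodule A X} (hF : Antitone F)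
    {m : ℕ} (h0 : F 0 = ⊤) (hm : F m = ⊥) :
    Module.rank R (RestrictScalars R A X) =
      ∑ i ∈ Finset.range m,
        Module.rank R (RestrictScalars R A (F i ⧸ (F (i + 1)).comap (F i).subtype)) := by
  have hbot : Module.rank R (RestrictScalars R A (F m)) = 0 := by
    rw [(LinearEquiv.ofEq _ _ hm).rank_restrictScalars_eq R]
    have := nontrivial_of_hasRankNullity (R := R)
    have : Subsingleton (RestrictScalars R A (⊥ : Submodule A X)) :=
      inferInstanceAs (Subsingleton (⊥ : Submodule A X))
    exact rank_subsingleton' _ _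
  rw [← (LinearEquiv.ofTop _ h0).rank_restrictScalars_eq R,
    hF.rank_restrictScalars_eq_sum_add R m, hbot, add_zero]

end RestrictScalars

section ZFiltration

variable (R : Type) [CommRing R] (n : ℕ) (M : Type) [AddCommGroup M] [Module (Az R n) M]

theorem zc_pow_self : zc R n ^ n = 0 := by
  rw [zc, ← map_pow, Ideal.Quotient.eq_zero_iff_mem]
  exact Ideal.subset_span rfl

theorem mem_zpowSub_iff {i : ℕ} {x : M} : x ∈ zpowSub R n M i ↔ ∃ y, zc R n ^ i • y = x := by
  simp [zpowSub]

theorem zpowSub_zero : zpowSub R n M 0 = ⊤ := by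
  ext x
  simp [mem_zpowSub_iff]

theorem zpowSub_self : zpowSub R n M n = ⊥ := by
  refine eq_bot_iff.mpr fun x hx => ?_
  obtain ⟨y, rfl⟩ := (mem_zpowSub_iff R n M).mp hx
  rw [zc_pow_self]
  exact zero_smul (Az R n) y

theorem zpowSub_antitone : Antitone (zpowSub R n M) := by
  refine antitone_nat_of_succ_le fun i x hx => ?_
  obtain ⟨y, rfl⟩ := (mem_zpowSub_iff R n M).mp hx
  exact (mem_zpowSub_iff R n M).mpr ⟨zc R n • y, by rw [pow_succ, mul_smul]⟩

theorem grk_eq_rank [IsDomain R] : grk R n M = Module.rank R (RestrictScalars R (Az R n) M) := by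
  rw [grk, (zpowSub_antitone R n M).rank_restrictScalars_eq_sum R (zpowSub_zero R n M)
    (zpowSub_self R n M)]
  exact Finset.sum_congr rfl fun i _ => rank_tensorProduct_of_isFractionRing _ _

end ZFiltration

theorem stmt5_general (R : Type) [CommRing R] [IsDomain R] (n : ℕ)
    (M' M M'' : Type) [AddCommGroup M'] [Module (Az R n) M']
    [AddCommGroup M] [Module (Az R n) M]
    [AddCommGroup M''] [Module (Az R n) M'']
    (f : M' →ₗ[Az R n] M) (g : M →ₗ[Az R n] M'')
    (hf : Function.Injective f) (hg : Function.Surjective g)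
    (hfg : LinearMap.range f = LinearMap.ker g) :
    grk R n M = grk R n M' + grk R n M'' := by
  rw [grk_eq_rank, grk_eq_rank, grk_eq_rank]
  exact Function.Exact.rank_restrictScalars_eq_add R hf hg (LinearMap.exact_iff.mpr hfg.symm)

/-- The generalized rank is additive on short exact sequences of finitely
generated modules over `A = R[z]/(z^n)`, `R` a DVR. -/
theorem stmt5 (R : Type) [CommRing R] [IsDomain R] [IsDiscreteValuationRing R] (n : ℕ)
    (M' M M'' : Type) [AddCommGroup M'] [Module (Az R n) M'] [Module.Finite (Az R n) M']
    [AddCommGroup M] [Module (Az R n) M] [Module.Finite (Az R n) M]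
    [AddCommGroup M''] [Module (Az R n) M''] [Module.Finite (Az R n) M'']
    (f : M' →ₗ[Az R n] M) (g : M →ₗ[Az R n] M'')
    (hf : Function.Injective f) (hg : Function.Surjective g)
    (hfg : LinearMap.range f = LinearMap.ker g) :
    grk R n M = grk R n M' + grk R n M'' :=
  stmt5_general R n M' M M'' f g hf hg hfg
end

section
/- Let R be a discrete valuation ring with uniformizer x, and A = R[z]/(z^n). A finitely generated A-module M has no nonzero element annihilated by a power of x if and only if the R-module M^{(1)} = {u ∈ M : zu = 0} is free. Moreover, in that case every quotient M^{(i)}/M^{(i-1)} is a free R-module. -/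
/-!
Over the PID `R`, a finitely generated module is free iff it is torsion-free, and `M^{(1)}` and
`M^{(i)}/M^{(i-1)}` are finitely generated over `R` because `A` is. Every nonzero `r : R` is a unit
times a power of `x`, so `x`-power torsion is all torsion. If `x^p u = 0` with `u ≠ 0`, then, `z`
being nilpotent, some `z^j u` is a nonzero element of `M^{(1)}` still killed by `x^p`. On the
quotients, `r z^{i-1} u = 0` with `r ≠ 0` forces `z^{i-1} u = 0` in a torsion-free `M`.
-/

open Polynomial

section RestrictScalars

variable {R A M : Type*} [CommRing R] [CommRing A] [Algebra R A] [AddCommGroup M] [Module A M]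

theorem free_restrictScalars_iff [IsDomain R] [IsPrincipalIdealRing R] [Module.Finite R A]
    [Module.Finite A M] :
    Module.Free R (RestrictScalars R A M) ↔
      ∀ r : R, r ≠ 0 → ∀ u : M, algebraMap R A r • u = 0 → u = 0 := by
  let _ : Module A (RestrictScalars R A M) := RestrictScalars.moduleOrig R A M
  have : Module.Finite A (RestrictScalars R A M) := ‹Module.Finite A M›
  have hfin : Module.Finite R (RestrictScalars R A M) := .trans A _
  refine (@Module.free_iff_isTorsionFree R _ (RestrictScalars R A M) _
    (RestrictScalars.module R A M) _ _ hfin).trans ?_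
  refine (@Module.isTorsionFree_iff_smul_eq_zero R (RestrictScalars R A M) _ _
    (RestrictScalars.module R A M) _).trans (forall_congr' fun r => ?_)
  exact ⟨fun h hr u hu => (h u hu).resolve_left hr,
    fun h u hu => or_iff_not_imp_left.2 fun hr => h hr u hu⟩

theorem IsDiscreteValuationRing.eq_zero_of_algebraMap_smul_eq_zero [IsDomain R]
    [IsDiscreteValuationRing R] {x : R} (hx : Irreducible x)
    (h : ∀ (u : M) (p : ℕ), algebraMap R A x ^ p • u = 0 → u = 0) {r : R} (hr : r ≠ 0)
    {u : M} (hu : algebraMap R A r • u = 0) : u = 0 := by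
  obtain ⟨p, v, rfl⟩ := IsDiscreteValuationRing.eq_unit_mul_pow_irreducible hr hx
  refine h u p ?_
  rwa [map_mul, mul_smul, (v.isUnit.map _).smul_eq_zero, map_pow] at hu

end RestrictScalars

theorem IsNilpotent.eq_zero_of_smul_eq_zero_of_ker {A M : Type*} [CommSemiring A]
    [AddCommMonoid M] [Module A M] {a s : A} (ha : IsNilpotent a)
    (h : ∀ v : M, a • v = 0 → s • v = 0 → v = 0) {u : M} (hu : s • u = 0) : u = 0 := by
  obtain ⟨k, hk⟩ := ha
  suffices ∀ k (u : M), a ^ k • u = 0 → s • u = 0 → u = 0 from this k u (by simp [hk]) hu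
  intro k
  induction k with
  | zero => intro u hu _; rwa [pow_zero, one_smul] at hu
  | succ k ih =>
    intro u hku hsu
    refine h u (ih _ ?_ ?_) hsu
    · rwa [← mul_smul, ← _root_.pow_succ]
    · rw [smul_comm, hsu, smul_zero]

section Az

variable (R : Type) [CommRing R] (n : ℕ)

theorem isNilpotent_zc : IsNilpotent (zc R n) :=
  ⟨n, by
    rw [zc, ← map_pow]
    exact Ideal.Quotient.eq_zero_iff_mem.2 (Ideal.mem_span_singleton_self _)⟩

-- `Az R n` is `AdjoinRoot (X ^ n)` by definition.
instance : Module.Finite R (Az R n) :=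
  .of_basis (AdjoinRoot.powerBasis' (monic_X_pow (R := R) n)).basis

variable {R n} {M : Type} [AddCommGroup M] [Module (Az R n) M]

theorem mem_ztor_iff {i : ℕ} {u : M} : u ∈ ztor R n M i ↔ zc R n ^ i • u = 0 := by
  rw [ztor, LinearMap.mem_ker, LinearMap.smul_apply, LinearMap.id_apply]

theorem ztor_quotient_torsionFree
    (htf : ∀ r : R, r ≠ 0 → ∀ u : M, algebraMap R (Az R n) r • u = 0 → u = 0) (i j : ℕ) :
    ∀ r : R, r ≠ 0 → ∀ q : ztor R n M i ⧸ (ztor R n M j).comap (ztor R n M i).subtype,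
      algebraMap R (Az R n) r • q = 0 → q = 0 := by
  intro r hr q hq
  obtain ⟨u, rfl⟩ := Submodule.Quotient.mk_surjective _ q
  rw [← Submodule.Quotient.mk_smul, Submodule.Quotient.mk_eq_zero, Submodule.mem_comap,
    mem_ztor_iff] at hq
  rw [Submodule.Quotient.mk_eq_zero, Submodule.mem_comap, mem_ztor_iff]
  exact htf r hr _ (by rwa [smul_comm])

end Az

/-- Let `R` be a DVR with uniformizer `x` and `A = R[z]/(z^n)`. A finitely
generated `A`-module `M` has no nonzero element annihilated by a power of `x` iff the
`R`-module `M^{(1)} = {u : z u = 0}` is free; and in that case every quotient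
`M^{(i)}/M^{(i-1)}` is a free `R`-module. -/
theorem stmt8 (R : Type) [CommRing R] [IsDomain R] [IsDiscreteValuationRing R] (n : ℕ)
    (x : R) (hx : Irreducible x)
    (M : Type) [AddCommGroup M] [Module (Az R n) M] [Module.Finite (Az R n) M] :
    ((∀ (u : M) (p : ℕ), (algebraMap R (Az R n) x) ^ p • u = 0 → u = 0) ↔
      Module.Free R (RestrictScalars R (Az R n) ↥(ztor R n M 1))) ∧
    ((∀ (u : M) (p : ℕ), (algebraMap R (Az R n) x) ^ p • u = 0 → u = 0) →
      ∀ i : ℕ, 1 ≤ i → i ≤ n →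
        Module.Free R (RestrictScalars R (Az R n)
          (ztor R n M i ⧸ Submodule.comap (ztor R n M i).subtype (ztor R n M (i - 1))))) := by
  have htf (h : ∀ (u : M) (p : ℕ), algebraMap R (Az R n) x ^ p • u = 0 → u = 0) (r : R)
      (hr : r ≠ 0) (u : M) : algebraMap R (Az R n) r • u = 0 → u = 0 :=
    IsDiscreteValuationRing.eq_zero_of_algebraMap_smul_eq_zero hx h hr
  refine ⟨⟨fun h => ?_, fun hfree u p hu => ?_⟩, fun h i _ _ => ?_⟩
  · rw [free_restrictScalars_iff]
    exact fun r hr v hv => Subtype.ext (htf h r hr v (congrArg Subtype.val hv))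
  · rw [free_restrictScalars_iff] at hfree
    refine (isNilpotent_zc R n).eq_zero_of_smul_eq_zero_of_ker (fun v hzv hxv => ?_) hu
    rw [← map_pow] at hxv
    exact congrArg Subtype.val (hfree (x ^ p) (pow_ne_zero p hx.ne_zero)
      ⟨v, mem_ztor_iff.2 (by rwa [pow_one])⟩ (Subtype.ext hxv))
  · rw [free_restrictScalars_iff]
    exact ztor_quotient_torsionFree (htf h) i (i - 1)
end

section
/- Let R be a discrete valuation ring with uniformizer x, A = R[z]/(z^n), and 0 → M' → M → M'' → 0 a short exact sequence of finitely generated A-modules each having no nonzero element annihilated by a power of x. Then the dual sequence 0 → Hom_A(M'', A) → Hom_A(M, A) → Hom_A(M', A) → 0 is exact. -/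
/-!
Write `z` for the class of `X` in `A = R[z]/(z^n)` and `topCoeff : A → R` for the coefficient of
`z^(n-1)`. Every `a : A` is recovered as `a = ∑ k < n, topCoeff (z^(n-1-k) * a) • z^k`, so
`(a, b) ↦ topCoeff (a * b)` is a perfect pairing and `ψ ↦ topCoeff ∘ ψ` identifies
`Hom_A(N, A)` with `Hom_R(N, R)` for every `A`-module `N`.
Hence `Hom_A(-, A)` is exact on any sequence of `A`-modules that splits over `R`. The sequence
`0 → M' → M → M'' → 0` does: `M''` is finitely generated and torsion-free over the discrete
valuation ring `R`, hence `R`-free.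
-/

open Polynomial

namespace Az

open Finset

variable (R : Type) [CommRing R] (n : ℕ)

noncomputable def topCoeff : Az R n →ₗ[R] R :=
  lcoeff R (n - 1) ∘ₗ AdjoinRoot.modByMonicHom (monic_X_pow n)

instance : Module.Finite R (Az R n) := (AdjoinRoot.powerBasis' (monic_X_pow n)).finite

variable {R n}

theorem zc_pow_eq_zero {k : ℕ} (hk : n ≤ k) : zc R n ^ k = 0 := by
  rw [zc, ← map_pow, Ideal.Quotient.eq_zero_iff_mem]
  exact Ideal.mem_span_singleton.mpr (pow_dvd_pow X hk)

theorem topCoeff_zc_pow (k : ℕ) : topCoeff R n (zc R n ^ k) = if k + 1 = n then 1 else 0 := by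
  rcases lt_or_ge k n with hk | hk
  · nontriviality R
    have hmod : (X ^ k : R[X]) %ₘ X ^ n = X ^ k :=
      (modByMonic_eq_self_iff (monic_X_pow n)).mpr (by simpa using hk)
    rw [zc, ← map_pow]
    change ((X ^ k : R[X]) %ₘ X ^ n).coeff (n - 1) = _
    rw [hmod, coeff_X_pow]
    exact if_congr (by omega) rfl rfl
  · rw [zc_pow_eq_zero hk, map_zero, if_neg (by omega)]

theorem sum_topCoeff_mul_zc_pow_smul (a : Az R n) :
    ∑ k ∈ range n, topCoeff R n (zc R n ^ (n - 1 - k) * a) • zc R n ^ k = a := by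
  obtain ⟨p, rfl⟩ := Ideal.Quotient.mk_surjective a
  induction p using Polynomial.induction_on' with
  | add p q hp hq => simp only [map_add, mul_add, add_smul, sum_add_distrib, hp, hq]
  | monomial j r =>
    have hmono : Ideal.Quotient.mk _ (monomial j r) = r • zc R n ^ j := by
      change Ideal.Quotient.mkₐ R _ _ = _
      rw [← smul_X_eq_monomial, map_smul, map_pow]; rfl
    have hcoeff : ∀ k ∈ range n, topCoeff R n (zc R n ^ (n - 1 - k) * zc R n ^ j) =
        if j = k then 1 else 0 := by
      intro k hk
      rw [← pow_add, topCoeff_zc_pow]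
      have := mem_range.mp hk
      exact if_congr (by omega) rfl rfl
    simp only [hmono, mul_smul_comm, map_smul, smul_assoc, ← smul_sum]
    rw [sum_congr rfl fun k hk => by rw [hcoeff k hk, ite_smul, one_smul, zero_smul], sum_ite_eq,
      ite_eq_left_iff.mpr fun hj => (zc_pow_eq_zero (by simpa using hj)).symm]

section dual

variable {N : Type} [AddCommGroup N] [Module (Az R n) N]

theorem eq_sum_topCoeff_smul (ψ : N →ₗ[Az R n] Az R n) (m : N) :
    ψ m = ∑ k ∈ range n, topCoeff R n (ψ (zc R n ^ (n - 1 - k) • m)) • zc R n ^ k := by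
  simp only [map_smul, smul_eq_mul]
  exact (sum_topCoeff_mul_zc_pow_smul _).symm

theorem ext_topCoeff {ψ₁ ψ₂ : N →ₗ[Az R n] Az R n}
    (h : ∀ m, topCoeff R n (ψ₁ m) = topCoeff R n (ψ₂ m)) : ψ₁ = ψ₂ := by
  ext m
  rw [eq_sum_topCoeff_smul ψ₁, eq_sum_topCoeff_smul ψ₂]
  simp only [h]

variable [Module R N] [IsScalarTower R (Az R n) N]

theorem topCoeff_mul_sum_smul (χ : N →ₗ[R] R) (c : Az R n) (m : N) :
    topCoeff R n (c * ∑ k ∈ range n, χ (zc R n ^ (n - 1 - k) • m) • zc R n ^ k) = χ (c • m) := by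
  conv_rhs => rw [← sum_topCoeff_mul_zc_pow_smul c, sum_smul, map_sum, ← sum_range_reflect]
  simp only [mul_sum, mul_smul_comm, map_sum, map_smul, smul_assoc, smul_eq_mul]
  refine sum_congr rfl fun k hk => ?_
  have hk : k ≤ n - 1 := by have := mem_range.mp hk; omega
  rw [Nat.sub_sub_self hk, mul_comm c, mul_comm]

noncomputable def dualLift (χ : N →ₗ[R] R) : N →ₗ[Az R n] Az R n where
  toFun m := ∑ k ∈ range n, χ (zc R n ^ (n - 1 - k) • m) • zc R n ^ k
  map_add' m m' := by simp only [smul_add, map_add, add_smul, sum_add_distrib]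
  map_smul' c m := by
    rw [RingHom.id_apply, smul_eq_mul, ← sum_topCoeff_mul_zc_pow_smul (c * _)]
    simp only [← mul_assoc, topCoeff_mul_sum_smul, mul_smul]

theorem topCoeff_dualLift (χ : N →ₗ[R] R) (m : N) : topCoeff R n (dualLift χ m) = χ m := by
  have h := topCoeff_mul_sum_smul χ (1 : Az R n) m
  rwa [one_mul, one_smul] at h

end dual

theorem dualMap_surjective_of_leftInverse {M' M : Type} [AddCommGroup M'] [Module R M']
    [Module (Az R n) M'] [IsScalarTower R (Az R n) M'] [AddCommGroup M] [Module R M]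
    [Module (Az R n) M] [IsScalarTower R (Az R n) M] (f : M' →ₗ[Az R n] M) (r : M →ₗ[R] M')
    (hr : r ∘ₗ f.restrictScalars R = LinearMap.id) : Function.Surjective f.dualMap := by
  intro φ
  refine ⟨dualLift (topCoeff R n ∘ₗ φ.restrictScalars R ∘ₗ r), ext_topCoeff fun m' => ?_⟩
  have hrf : r (f m') = m' := LinearMap.congr_fun hr m'
  simp [topCoeff_dualLift, hrf]

end Az

theorem Function.Exact.exists_leftInverse_of_projective {R M' M M'' : Type*} [Ring R]
    [AddCommGroup M'] [AddCommGroup M] [AddCommGroup M''] [Module R M'] [Module R M]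
    [Module R M''] [Module.Projective R M''] {f : M' →ₗ[R] M} {g : M →ₗ[R] M''}
    (h : Function.Exact f g) (hf : Function.Injective f) (hg : Function.Surjective g) :
    ∃ r : M →ₗ[R] M', r ∘ₗ f = LinearMap.id :=
  ((h.split_tfae hf hg).out 0 1).mp (Module.projective_lifting_property g LinearMap.id hg)

theorem Module.isTorsionFree_of_pow_smul_eq_zero {R : Type} [CommRing R] [IsDomain R]
    [IsDiscreteValuationRing R] {x : R} (hx : Irreducible x) {N : Type} [AddCommGroup N]
    [Module R N] (h : ∀ (u : N) (p : ℕ), x ^ p • u = 0 → u = 0) : Module.IsTorsionFree R N := by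
  refine .of_smul_eq_zero fun r u hru => or_iff_not_imp_left.mpr fun hr => ?_
  obtain ⟨p, w, rfl⟩ := IsDiscreteValuationRing.eq_unit_mul_pow_irreducible hr hx
  rw [mul_smul, ← Units.smul_def, smul_eq_zero_iff_eq] at hru
  exact h u p hru

theorem stmt11_general (R : Type) [CommRing R] [IsDomain R] [IsDiscreteValuationRing R] (n : ℕ)
    (x : R) (hx : Irreducible x)
    (M' M M'' : Type)
    [AddCommGroup M'] [Module (Az R n) M']
    [AddCommGroup M] [Module (Az R n) M]
    [AddCommGroup M''] [Module (Az R n) M''] [Module.Finite (Az R n) M'']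
    (htf'' : ∀ (u : M'') (p : ℕ), (algebraMap R (Az R n) x) ^ p • u = 0 → u = 0)
    (f : M' →ₗ[Az R n] M) (g : M →ₗ[Az R n] M'')
    (hf : Function.Injective f) (hg : Function.Surjective g)
    (hfg : LinearMap.range f = LinearMap.ker g) :
    Function.Injective g.dualMap ∧
    LinearMap.range g.dualMap = LinearMap.ker f.dualMap ∧
    Function.Surjective f.dualMap := by
  let : Module R M' := .compHom M' (algebraMap R (Az R n))
  let : Module R M := .compHom M (algebraMap R (Az R n))
  let : Module R M'' := .compHom M'' (algebraMap R (Az R n))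
  have : IsScalarTower R (Az R n) M' := .of_compHom R (Az R n) M'
  have : IsScalarTower R (Az R n) M := .of_compHom R (Az R n) M
  have : IsScalarTower R (Az R n) M'' := .of_compHom R (Az R n) M''
  have : Module.Finite R M'' := .trans (Az R n) M''
  have : Module.IsTorsionFree R M'' := Module.isTorsionFree_of_pow_smul_eq_zero hx
    fun u p h => htf'' u p (by rwa [← map_pow, algebraMap_smul])
  have hexact : Function.Exact f g := LinearMap.exact_iff.mpr hfg.symm
  obtain ⟨r, hr⟩ := Function.Exact.exists_leftInverse_of_projective
    (f := f.restrictScalars R) (g := g.restrictScalars R) hexact hf hg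
  exact ⟨LinearMap.dualMap_injective_of_surjective hg,
    (LinearMap.exact_lcomp_of_exact_of_surjective _ hexact hg).linearMap_ker_eq.symm,
    Az.dualMap_surjective_of_leftInverse f r hr⟩

set_option synthInstance.maxHeartbeats 400000 in
/-- For `A = R[z]/(z^n)` over a DVR `R` with uniformizer `x`, given a short
exact sequence `0 → M' → M → M'' → 0` of finitely generated torsion-free `A`-modules (no
nonzero element killed by a power of `x`), the dual sequence
`0 → Hom_A(M'', A) → Hom_A(M, A) → Hom_A(M', A) → 0` is exact. -/
theorem stmt11 (R : Type) [CommRing R] [IsDomain R] [IsDiscreteValuationRing R] (n : ℕ)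
    (x : R) (hx : Irreducible x)
    (M' M M'' : Type)
    [AddCommGroup M'] [Module (Az R n) M'] [Module.Finite (Az R n) M']
    [AddCommGroup M] [Module (Az R n) M] [Module.Finite (Az R n) M]
    [AddCommGroup M''] [Module (Az R n) M''] [Module.Finite (Az R n) M'']
    (htf' : ∀ (u : M') (p : ℕ), (algebraMap R (Az R n) x) ^ p • u = 0 → u = 0)
    (htf : ∀ (u : M) (p : ℕ), (algebraMap R (Az R n) x) ^ p • u = 0 → u = 0)
    (htf'' : ∀ (u : M'') (p : ℕ), (algebraMap R (Az R n) x) ^ p • u = 0 → u = 0)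
    (f : M' →ₗ[Az R n] M) (g : M →ₗ[Az R n] M'')
    (hf : Function.Injective f) (hg : Function.Surjective g)
    (hfg : LinearMap.range f = LinearMap.ker g) :
    Function.Injective g.dualMap ∧
    LinearMap.range g.dualMap = LinearMap.ker f.dualMap ∧
    Function.Surjective f.dualMap :=
  stmt11_general R n x hx M' M M'' htf'' f g hf hg hfg
end
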